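/- arXiv:1712.01993 — 3 statements merged into one kernel-verified Lean document; each statement's English description precedes it below -/
import Mathlib

section
/- For any vectors A, B in ℝ³ and any γ > 0, we have |B/(1+γ|B|²) − A/(1+γ|A|²)| ≤ (9/4)·|B − A|. -/
theorem quench_lipschitz (A B : EuclideanSpace ℝ (Fin 3)) (γ : ℝ) (hγ : 0 < γ) :
    ‖(1 + γ * ‖B‖ ^ 2)⁻¹ • B - (1 + γ * ‖A‖ ^ 2)⁻¹ • A‖ ≤ (9 / 4) * ‖B - A‖ := by
  set a := ‖A‖ with ha
  set b := ‖B‖ with hb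
  set d := ‖B - A‖ with hd
  set p := 1 + γ * a ^ 2 with hp
  set q := 1 + γ * b ^ 2 with hq
  have ha0 : 0 ≤ a := norm_nonneg A
  have hb0 : 0 ≤ b := norm_nonneg B
  have hd0 : 0 ≤ d := norm_nonneg _
  have hp0 : 0 < p := by positivity
  have hq0 : 0 < q := by positivity
  have hp1 : 1 ≤ p := by nlinarith [sq_nonneg a]
  have hq1 : 1 ≤ q := by nlinarith [sq_nonneg b]
  have habd : |a - b| ≤ d := by
    have := abs_norm_sub_norm_le A B
    rwa [← norm_neg (A - B), neg_sub] at this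
  have key : q⁻¹ • B - p⁻¹ • A = q⁻¹ • (B - A) + (q⁻¹ - p⁻¹) • A := by
    rw [smul_sub, sub_smul]; abel
  rw [key]
  have htri : ‖q⁻¹ • (B - A) + (q⁻¹ - p⁻¹) • A‖ ≤ q⁻¹ * d + |q⁻¹ - p⁻¹| * a := by
    calc ‖q⁻¹ • (B - A) + (q⁻¹ - p⁻¹) • A‖
        ≤ ‖q⁻¹ • (B - A)‖ + ‖(q⁻¹ - p⁻¹) • A‖ := norm_add_le _ _
      _ = |q⁻¹| * d + |q⁻¹ - p⁻¹| * a := by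
          rw [norm_smul, norm_smul, Real.norm_eq_abs, Real.norm_eq_abs]
      _ = q⁻¹ * d + |q⁻¹ - p⁻¹| * a := by
          rw [abs_of_pos (by positivity)]
  refine htri.trans ?_
  have hdiff : |q⁻¹ - p⁻¹| ≤ γ * d * (a + b) / (p * q) := by
    have h1 : q⁻¹ - p⁻¹ = (p - q) / (p * q) := by
      rw [inv_sub_inv hq0.ne' hp0.ne', mul_comm]
    rw [h1, abs_div, abs_of_pos (by positivity : (0:ℝ) < p * q)]
    apply div_le_div_of_nonneg_right ?_ (by positivity) |>.trans_eq rfl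
    have h2 : p - q = γ * ((a - b) * (a + b)) := by rw [hp, hq]; ring
    rw [h2, abs_mul, abs_of_pos hγ, abs_mul, abs_of_nonneg (by positivity : (0:ℝ) ≤ a + b)]
    have : γ * (|a - b| * (a + b)) ≤ γ * (d * (a + b)) := by
      apply mul_le_mul_of_nonneg_left ?_ hγ.le
      exact mul_le_mul_of_nonneg_right habd (by positivity)
    linarith
  have hstep : q⁻¹ * d + |q⁻¹ - p⁻¹| * a ≤ q⁻¹ * d + (γ * d * (a + b) / (p * q)) * a :=
    by nlinarith [hdiff]
  refine hstep.trans ?_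
  rw [div_mul_eq_mul_div, inv_eq_one_div, one_div_mul_eq_div,
    div_add_div _ _ (by positivity : q ≠ 0) (by positivity : (p * q) ≠ 0),
    div_le_iff₀ (by positivity : (0:ℝ) < q * (p * q))]
  have hfac : p + γ * a * (a + b) ≤ 9 / 4 * (p * q) := by
    nlinarith [mul_nonneg hγ.le (sq_nonneg (a - 2 * b)), sq_nonneg (γ * a * b),
      mul_nonneg hγ.le (sq_nonneg a), mul_nonneg hγ.le (sq_nonneg b)]
  have hmul := mul_le_mul_of_nonneg_left hfac (mul_nonneg hd0 hq0.le)
  nlinarith [hmul]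
end

section
/- For all real numbers v, w and constants ζ > 0, ω ≥ 0, we have (Ψ(v) − Ψ(w))(v − w) ≥ (ζ/8)|v − w|⁵ + ω|v − w|², where Ψ(t) = ζ|t|³t + ωt. -/
lemma p4_bound (a b : ℝ) : (a + b) ^ 4 ≤ 8 * (a ^ 4 + b ^ 4) := by
  nlinarith [sq_nonneg (a - b), sq_nonneg (a ^ 2 - b ^ 2), sq_nonneg (a + b), sq_nonneg (a * b)]

lemma pow4_super (w v : ℝ) (hw : 0 ≤ w) (h : w ≤ v) : (v - w) ^ 4 ≤ v ^ 4 - w ^ 4 := by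
  have hd : 0 ≤ v - w := sub_nonneg.2 h
  nlinarith [mul_nonneg (mul_nonneg (mul_nonneg hd hd) hd) hw,
    mul_nonneg (mul_nonneg (mul_nonneg hd hw) hw) hw,
    mul_nonneg (mul_nonneg (mul_nonneg hd hd) hw) hw]

lemma key_mono (v w : ℝ) (h : w ≤ v) :
    (|v| ^ 3 * v - |w| ^ 3 * w) * (v - w) ≥ (1 / 8) * (v - w) ^ 5 := by
  have hd : 0 ≤ v - w := sub_nonneg.2 h
  have hd5 : 0 ≤ (v - w) ^ 5 := by positivity
  rcases le_total 0 w with hw | hw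
  · have hv : 0 ≤ v := hw.trans h
    rw [abs_of_nonneg hv, abs_of_nonneg hw]
    have h1 := pow4_super w v hw h
    nlinarith [mul_le_mul_of_nonneg_right h1 hd]
  · rcases le_total 0 v with hv | hv
    · rw [abs_of_nonneg hv, abs_of_nonpos hw]
      have h1 := p4_bound v (-w)
      nlinarith [mul_le_mul_of_nonneg_right h1 hd]
    · rw [abs_of_nonpos hv, abs_of_nonpos hw]
      have h1 := pow4_super (-v) (-w) (neg_nonneg.2 hv) (by linarith)
      nlinarith [mul_le_mul_of_nonneg_right h1 hd]

theorem radiation_strong_monotonicity (ζ ω v w : ℝ) (hζ : 0 < ζ) (hω : 0 ≤ ω) :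
    ((ζ * |v| ^ 3 * v + ω * v) - (ζ * |w| ^ 3 * w + ω * w)) * (v - w) ≥
      ζ / 8 * |v - w| ^ 5 + ω * |v - w| ^ 2 := by
  rcases le_total w v with h | h
  · have hk := key_mono v w h
    rw [abs_of_nonneg (sub_nonneg.2 h)]
    nlinarith [mul_le_mul_of_nonneg_left hk hζ.le]
  · have hk := key_mono w v h
    rw [abs_of_nonpos (sub_nonpos.2 h)]
    nlinarith [mul_le_mul_of_nonneg_left hk hζ.le]
end

section
/- For all real numbers a, b, we have (|a|³a − |b|³b)(a − b) ≥ (1/8)|a − b|⁵. -/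
private lemma aux1 (x y : ℝ) (hy : 0 ≤ y) (hxy : y ≤ x) :
    (x ^ 4 - y ^ 4) * (x - y) ≥ (1 / 8) * (x - y) ^ 5 := by
  have hx : 0 ≤ x := hy.trans hxy
  nlinarith [mul_nonneg (sq_nonneg (x - y)) (mul_nonneg (mul_nonneg hx hx) hx),
    mul_nonneg (sq_nonneg (x - y)) (mul_nonneg (mul_nonneg hx hx) hy),
    mul_nonneg (sq_nonneg (x - y)) (mul_nonneg (mul_nonneg hx hy) hy),
    mul_nonneg (sq_nonneg (x - y)) (mul_nonneg (mul_nonneg hy hy) hy)]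

private lemma aux2 (x y : ℝ) (hx : 0 ≤ x) (hy : 0 ≤ y) :
    (x ^ 4 + y ^ 4) * (x + y) ≥ (1 / 8) * (x + y) ^ 5 := by
  nlinarith [mul_nonneg (add_nonneg hx hy) (sq_nonneg (x - y)),
    mul_nonneg (add_nonneg hx hy) (sq_nonneg (x ^ 2 - y ^ 2)),
    mul_nonneg (mul_nonneg (add_nonneg hx hy) (sq_nonneg (x - y))) (sq_nonneg (x + y)),
    mul_nonneg (mul_nonneg (add_nonneg hx hy) (sq_nonneg (x - y))) (sq_nonneg (x - y))]

theorem quartic_strong_monotonicity (a b : ℝ) :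
    (|a| ^ 3 * a - |b| ^ 3 * b) * (a - b) ≥ (1 / 8) * |a - b| ^ 5 := by
  rcases le_or_gt 0 a with ha | ha <;> rcases le_or_gt 0 b with hb | hb
  · rw [abs_of_nonneg ha, abs_of_nonneg hb]
    rcases le_total b a with h | h
    · rw [abs_of_nonneg (by linarith : (0:ℝ) ≤ a - b)]
      have := aux1 a b hb h
      nlinarith [this]
    · rw [abs_of_nonpos (by linarith : a - b ≤ 0)]
      have := aux1 b a ha h
      nlinarith [this]
  · rw [abs_of_nonneg ha, abs_of_neg hb, abs_of_nonneg (by linarith : (0:ℝ) ≤ a - b)]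
    have := aux2 a (-b) ha (by linarith)
    nlinarith [this]
  · rw [abs_of_neg ha, abs_of_nonneg hb, abs_of_nonpos (by linarith : a - b ≤ 0)]
    have := aux2 (-a) b (by linarith) hb
    nlinarith [this]
  · rw [abs_of_neg ha, abs_of_neg hb]
    rcases le_total b a with h | h
    · rw [abs_of_nonneg (by linarith : (0:ℝ) ≤ a - b)]
      have := aux1 (-b) (-a) (by linarith) (by linarith)
      nlinarith [this]
    · rw [abs_of_nonpos (by linarith : a - b ≤ 0)]
      have := aux1 (-a) (-b) (by linarith) (by linarith)
      nlinarith [this]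
end
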